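/- Suppose the multiset S consists of exactly w copies of each integer in {0, 1, ..., n-1}, so s = w·n. Then there exists a bijection π of {1, ..., s} such that the set {p_i + π(i) : 1 ≤ i ≤ s} has exactly w distinct elements; consequently, combined with the multiplicity lower bound, the minimum cost equals w. -/
import Mathlib


/-- If the multiset consists of exactly `w` copies of each of `0, …, n-1`
(encoded as `p i = i % n` on `Fin (w*n)`), then some bijection achieves cost
exactly `w`, and every bijection has cost at least `w`; hence the minimum cost
equals `w`. -/
theorem column_regular_min_cost_eq_weight
    (w n : ℕ) (hw : 0 < w) (hn : 0 < n)
    (p : Fin (w * n) → ℤ) (hp : ∀ i, p i = ((i : ℕ) % n : ℤ)) :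
    (∃ π : Equiv.Perm (Fin (w * n)),
        (Finset.image (fun i => p i + ((π i : ℕ) : ℤ)) Finset.univ).card = w) ∧
    (∀ π : Equiv.Perm (Fin (w * n)),
        w ≤ (Finset.image (fun i => p i + ((π i : ℕ) : ℤ)) Finset.univ).card) := by
  constructor
  · -- existence of a permutation achieving cost `w`
    have hdiv : ∀ i : Fin (w * n), (i : ℕ) / n < w := by
      intro i
      exact Nat.div_lt_of_lt_mul (Nat.lt_of_lt_of_le i.isLt (le_of_eq (Nat.mul_comm w n)))
    have hmem : ∀ i : Fin (w * n), (i : ℕ) / n * n + (n - 1 - (i : ℕ) % n) < w * n := by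
      intro i
      have h1 : ((i : ℕ) / n + 1) * n ≤ w * n :=
        Nat.mul_le_mul_right n (Nat.succ_le_of_lt (hdiv i))
      have h2 : n - 1 - (i : ℕ) % n < n := by omega
      calc (i : ℕ) / n * n + (n - 1 - (i : ℕ) % n)
          < (i : ℕ) / n * n + n := Nat.add_lt_add_left h2 _
        _ = ((i : ℕ) / n + 1) * n := by ring
        _ ≤ w * n := h1
    set f : Fin (w * n) → Fin (w * n) :=
      fun i => ⟨(i : ℕ) / n * n + (n - 1 - (i : ℕ) % n), hmem i⟩ with hf
    have hfval : ∀ i : Fin (w * n),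
        ((f i : ℕ) / n = (i : ℕ) / n) ∧ ((f i : ℕ) % n = n - 1 - (i : ℕ) % n) := by
      intro i
      have hb : n - 1 - (i : ℕ) % n < n := by omega
      constructor
      · show ((i : ℕ) / n * n + (n - 1 - (i : ℕ) % n)) / n = (i : ℕ) / n
        rw [Nat.add_comm, Nat.add_mul_div_right _ _ hn, Nat.div_eq_of_lt hb, Nat.zero_add]
      · show ((i : ℕ) / n * n + (n - 1 - (i : ℕ) % n)) % n = n - 1 - (i : ℕ) % n
        rw [Nat.add_comm, Nat.add_mul_mod_self_right, Nat.mod_eq_of_lt hb]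
    have hff : ∀ i, f (f i) = i := by
      intro i
      apply Fin.ext
      show ((f i : ℕ)) / n * n + (n - 1 - (f i : ℕ) % n) = (i : ℕ)
      rw [(hfval i).1, (hfval i).2]
      have h1 : (i : ℕ) % n < n := Nat.mod_lt _ hn
      have h2 : n - 1 - (n - 1 - (i : ℕ) % n) = (i : ℕ) % n := by omega
      rw [h2, Nat.mul_comm ((i : ℕ) / n) n]
      exact Nat.div_add_mod _ _
    refine ⟨⟨f, f, hff, hff⟩, ?_⟩
    have hval : ∀ i : Fin (w * n),
        p i + ((f i : ℕ) : ℤ) = (((i : ℕ) / n * n + (n - 1) : ℕ) : ℤ) := by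
      intro i
      rw [hp]
      have hfi : ((f i : ℕ) : ℤ) = (((i : ℕ) / n * n + (n - 1 - (i : ℕ) % n) : ℕ) : ℤ) := rfl
      rw [hfi, ← Int.natCast_mod, ← Nat.cast_add, Nat.cast_inj]
      have h1 : (i : ℕ) % n < n := Nat.mod_lt _ hn
      generalize (i : ℕ) / n * n = a
      omega
    show (Finset.image (fun i => p i + ((f i : ℕ) : ℤ)) Finset.univ).card = w
    have himg : Finset.image (fun i => p i + ((f i : ℕ) : ℤ)) Finset.univ
        = Finset.image (fun q : ℕ => ((q * n + (n - 1) : ℕ) : ℤ)) (Finset.range w) := by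
      ext a
      simp only [Finset.mem_image, Finset.mem_univ, true_and, Finset.mem_range]
      constructor
      · rintro ⟨i, rfl⟩
        exact ⟨(i : ℕ) / n, hdiv i, (hval i).symm⟩
      · rintro ⟨q, hq, rfl⟩
        have hqn : q * n < w * n := (Nat.mul_lt_mul_right hn).mpr hq
        refine ⟨⟨q * n, hqn⟩, ?_⟩
        rw [hval]
        show (((q * n) / n * n + (n - 1) : ℕ) : ℤ) = ((q * n + (n - 1) : ℕ) : ℤ)
        rw [Nat.mul_div_cancel _ hn]
    rw [himg, Finset.card_image_of_injOn, Finset.card_range]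
    intro a _ b _ hab
    have hab' : a * n + (n - 1) = b * n + (n - 1) := by
      have : ((a * n + (n - 1) : ℕ) : ℤ) = ((b * n + (n - 1) : ℕ) : ℤ) := hab
      exact_mod_cast this
    have : a * n = b * n := by omega
    exact Nat.eq_of_mul_eq_mul_right hn this
  · intro π
    have key : ∀ v ∈ Finset.image (fun i => p i + ((π i : ℕ) : ℤ)) Finset.univ,
        (Finset.univ.filter (fun i => p i + ((π i : ℕ) : ℤ) = v)).card ≤ n := by
      intro v _
      have : (Finset.univ.filter (fun i => p i + ((π i : ℕ) : ℤ) = v)).card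
          ≤ (Finset.range n).card := by
        refine Finset.card_le_card_of_injOn (fun i => (i : ℕ) % n) ?_ ?_
        · intro i _
          exact Finset.mem_range.mpr (Nat.mod_lt _ hn)
        · intro i hi j hj hij
          simp only [Finset.mem_coe, Finset.mem_filter, Finset.mem_univ, true_and] at hi hj
          have hij' : (i : ℕ) % n = (j : ℕ) % n := hij
          have hpij : p i = p j := by rw [hp, hp]; exact_mod_cast hij'
          have hcast : ((π i : ℕ) : ℤ) = ((π j : ℕ) : ℤ) := by
            have h := hi.trans hj.symm
            rw [hpij] at h
            linarith
          have : (π i : ℕ) = (π j : ℕ) := Int.ofNat_inj.mp hcast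
          exact π.injective (Fin.ext this)
      simpa using this
    have h := Finset.card_le_mul_card_image (s := (Finset.univ : Finset (Fin (w * n))))
      (f := fun i => p i + ((π i : ℕ) : ℤ)) n key
    rw [Finset.card_univ, Fintype.card_fin] at h
    have h' : n * w ≤ n * (Finset.image (fun i => p i + ((π i : ℕ) : ℤ)) Finset.univ).card := by
      rw [Nat.mul_comm n w]; exact h
    exact Nat.le_of_mul_le_mul_left h' hn
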